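/- arXiv:2312.16452 — 2 statements merged into one kernel-verified Lean document; each statement's English description precedes it below -/
import Mathlib

section
/- Let ΛQ(y) = 2y/(1+y²), A the operator (Au)(y) = −u'(y) + Z(y)u(y)/y with Z(y) = (1−y²)/(1+y²), and for continuous f : [0,∞) → ℝ let (H⁻¹f)(y) = ΛQ(y) ∫₀^y fΓ x dx − Γ(y) ∫₀^y fΛQ x dx, with Γ(y) = (2y/(1+y²))·(y²/8 + (log y)/2 − 1/(8y²)). Then for all y > 0: (i) (A H⁻¹f)(y) = (1/(y·ΛQ(y))) ∫₀^y f(x)·ΛQ(x)· x dx; (ii) (H⁻¹f)(y) = −ΛQ(y) ∫₀^y (A H⁻¹f)(x)/ΛQ(x) dx; (iii) for y ≥ 1, |(A H⁻¹f)(y)| ≤ ∫₀^y |f(x)| dx. -/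
/-!
Since `ΛQ'/ΛQ = Z/y`, the operator factors as `A(ΛQ g) = -ΛQ g'`. Write `Γ = ΛQ ρ` with
`ρ' = 1/(y ΛQ²)`, `V(y) = ∫₀^y f ΛQ x` and `W(y) = ∫₀^y f Γ x`, so that `H⁻¹f = ΛQ (W - ρ V)`.
In `(W - ρ V)'` the terms containing `f` cancel, leaving `-ρ' V`; hence `A H⁻¹f = V/(y ΛQ)`,
which is (i). Integrating `ρ' V = A H⁻¹f / ΛQ` from `0` gives (ii): the boundary term `W - ρ V`
vanishes at `0⁺` because `|V(x)| ≤ M x² ΛQ(x)` with `M` a bound for `|f|` near `0`, so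
`|ρ V| ≤ M x |x Γ(x)| → 0`. Finally (iii) follows from (i) because `x ΛQ(x)` is increasing.
-/

open Real

/-- The resonance `ΛQ(y) = 2y/(1+y²)`. -/
noncomputable def LamQ (y : ℝ) : ℝ := 2 * y / (1 + y ^ 2)

/-- `Z(y) = (1-y²)/(1+y²)`. -/
noncomputable def Zfun (y : ℝ) : ℝ := (1 - y ^ 2) / (1 + y ^ 2)

/-- `(Au)(y) = -u'(y) + Z(y)u(y)/y`. -/
noncomputable def Aop (u : ℝ → ℝ) : ℝ → ℝ := fun y => -deriv u y + Zfun y * u y / y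

/-- The second element `Γ` of the kernel of `H`. -/
noncomputable def Gam (y : ℝ) : ℝ :=
  (2 * y / (1 + y ^ 2)) * (y ^ 2 / 8 + Real.log y / 2 - 1 / (8 * y ^ 2))

/-- The inverse `H⁻¹f` given by variation of parameters. -/
noncomputable def Hinv (f : ℝ → ℝ) (y : ℝ) : ℝ :=
  LamQ y * (∫ x in (0:ℝ)..y, f x * Gam x * x) - Gam y * (∫ x in (0:ℝ)..y, f x * LamQ x * x)

open MeasureTheory intervalIntegral Set Filter Topology

noncomputable def rho (y : ℝ) : ℝ := y ^ 2 / 8 + log y / 2 - 1 / (8 * y ^ 2)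

lemma Gam_eq_LamQ_mul_rho (y : ℝ) : Gam y = LamQ y * rho y := rfl

lemma LamQ_pos {y : ℝ} (hy : 0 < y) : 0 < LamQ y := by
  unfold LamQ; positivity

lemma LamQ_nonneg {y : ℝ} (hy : 0 ≤ y) : 0 ≤ LamQ y := by
  unfold LamQ; positivity

lemma continuous_LamQ : Continuous LamQ :=
  (continuous_const.mul continuous_id).div (by fun_prop) fun y => by positivity

lemma hasDerivAt_LamQ {y : ℝ} (hy : y ≠ 0) : HasDerivAt LamQ (Zfun y * LamQ y / y) y := by
  refine (((hasDerivAt_id' y).const_mul 2).fun_div ((hasDerivAt_pow 2 y).const_add 1)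
    (by positivity)).congr_deriv ?_
  simp only [Zfun, LamQ]
  field_simp
  ring

lemma monotoneOn_mul_LamQ : MonotoneOn (fun x => x * LamQ x) (Ici 0) := by
  intro x hx y hy hxy
  simp only [LamQ]
  rw [mul_div_assoc', mul_div_assoc', div_le_div_iff₀ (by positivity) (by positivity)]
  nlinarith [mul_le_mul hxy hxy (mem_Ici.1 hx) (mem_Ici.1 hy)]

lemma hasDerivAt_rho {y : ℝ} (hy : 0 < y) : HasDerivAt rho (1 / (y * LamQ y ^ 2)) y := by
  refine ((((hasDerivAt_pow 2 y).div_const 8).fun_add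
    ((hasDerivAt_log hy.ne').div_const 2)).fun_sub ((hasDerivAt_const y (1 : ℝ)).fun_div
      ((hasDerivAt_pow 2 y).const_mul 8) (by positivity))).congr_deriv ?_
  simp only [LamQ]
  field_simp
  ring

lemma Aop_LamQ_mul {g : ℝ → ℝ} {g' y : ℝ} (hy : y ≠ 0) (hg : HasDerivAt g g' y) :
    Aop (fun x => LamQ x * g x) y = -(LamQ y * g') := by
  rw [Aop, ((hasDerivAt_LamQ hy).fun_mul hg).deriv]
  field_simp
  ring

-- The continuous extension of `x ↦ Γ(x) x` to `x = 0` (`x² log x` is continuous as `log 0 = 0`).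
noncomputable def gamMulSelf (x : ℝ) : ℝ := (x ^ 4 / 4 + x ^ 2 * log x - 1 / 4) / (1 + x ^ 2)

lemma continuous_gamMulSelf : Continuous gamMulSelf := by
  have h : Continuous fun x : ℝ => x ^ 2 * log x := by
    simpa only [pow_two, mul_assoc] using continuous_id'.fun_mul continuous_mul_log
  exact (((continuous_pow 4).div_const 4).add h |>.sub continuous_const).div (by fun_prop)
    fun x => by positivity

lemma Gam_mul_self {x : ℝ} (hx : x ≠ 0) : Gam x * x = gamMulSelf x := by
  simp only [Gam, gamMulSelf]
  field_simp
  ring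

noncomputable def intLamQ (f : ℝ → ℝ) (y : ℝ) : ℝ := ∫ x in (0:ℝ)..y, f x * LamQ x * x

noncomputable def intGam (f : ℝ → ℝ) (y : ℝ) : ℝ := ∫ x in (0:ℝ)..y, f x * Gam x * x

lemma Hinv_eq (f : ℝ → ℝ) : Hinv f = fun y => LamQ y * (intGam f y - rho y * intLamQ f y) := by
  funext y
  rw [Hinv, Gam_eq_LamQ_mul_rho, intGam, intLamQ]
  ring

section

variable {f : ℝ → ℝ}

lemma intervalIntegrable_LamQ_mul (hf : ContinuousOn f (Ici 0)) {y : ℝ} (hy : 0 ≤ y) :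
    IntervalIntegrable (fun x => f x * LamQ x * x) volume 0 y :=
  ContinuousOn.intervalIntegrable <| by
    rw [uIcc_of_le hy]
    exact ((hf.mul continuous_LamQ.continuousOn).mul continuousOn_id).mono Icc_subset_Ici_self

lemma intervalIntegrable_Gam_mul (hf : ContinuousOn f (Ici 0)) {y : ℝ} (hy : 0 ≤ y) :
    IntervalIntegrable (fun x => f x * Gam x * x) volume 0 y := by
  have h : IntervalIntegrable (fun x => f x * gamMulSelf x) volume 0 y :=
    ContinuousOn.intervalIntegrable <| by
      rw [uIcc_of_le hy]
      exact (hf.mul continuous_gamMulSelf.continuousOn).mono Icc_subset_Ici_self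
  refine h.congr fun x hx => ?_
  rw [uIoc_of_le hy] at hx
  simp only [mul_assoc, Gam_mul_self hx.1.ne']

lemma continuousOn_Gam_mul (hf : ContinuousOn f (Ici 0)) :
    ContinuousOn (fun x => f x * Gam x * x) (Ioi 0) := by
  refine ((hf.mono Ioi_subset_Ici_self).mul continuous_gamMulSelf.continuousOn).congr fun x hx => ?_
  simp only [Pi.mul_apply, mul_assoc, Gam_mul_self (ne_of_gt hx)]

lemma hasDerivAt_intLamQ (hf : ContinuousOn f (Ici 0)) {y : ℝ} (hy : 0 < y) :
    HasDerivAt (intLamQ f) (f y * LamQ y * y) y :=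
  have hc : ContinuousOn (fun x => f x * LamQ x * x) (Ioi 0) :=
    ((hf.mono Ioi_subset_Ici_self).mul continuous_LamQ.continuousOn).mul continuousOn_id
  integral_hasDerivAt_right (intervalIntegrable_LamQ_mul hf hy.le)
    (hc.stronglyMeasurableAtFilter isOpen_Ioi y hy) (hc.continuousAt (Ioi_mem_nhds hy))

lemma hasDerivAt_intGam (hf : ContinuousOn f (Ici 0)) {y : ℝ} (hy : 0 < y) :
    HasDerivAt (intGam f) (f y * Gam y * y) y :=
  integral_hasDerivAt_right (intervalIntegrable_Gam_mul hf hy.le)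
    ((continuousOn_Gam_mul hf).stronglyMeasurableAtFilter isOpen_Ioi y hy)
    ((continuousOn_Gam_mul hf).continuousAt (Ioi_mem_nhds hy))

lemma hasDerivAt_intGam_sub_rho_mul (hf : ContinuousOn f (Ici 0)) {y : ℝ} (hy : 0 < y) :
    HasDerivAt (fun x => intGam f x - rho x * intLamQ f x)
      (-(intLamQ f y / (y * LamQ y ^ 2))) y := by
  refine ((hasDerivAt_intGam hf hy).fun_sub ((hasDerivAt_rho hy).fun_mul
    (hasDerivAt_intLamQ hf hy))).congr_deriv ?_
  rw [Gam_eq_LamQ_mul_rho]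
  ring

lemma Aop_Hinv (hf : ContinuousOn f (Ici 0)) {y : ℝ} (hy : 0 < y) :
    Aop (Hinv f) y = 1 / (y * LamQ y) * intLamQ f y := by
  rw [Hinv_eq, Aop_LamQ_mul hy.ne' (hasDerivAt_intGam_sub_rho_mul hf hy)]
  have := (LamQ_pos hy).ne'
  field_simp

lemma abs_intLamQ_le {y M : ℝ} (hy : 0 ≤ y) (hM : ∀ x ∈ Icc 0 y, ‖f x‖ ≤ M) :
    |intLamQ f y| ≤ M * y * (y * LamQ y) := by
  have hbound : ∀ x ∈ uIoc 0 y, ‖f x * LamQ x * x‖ ≤ M * (y * LamQ y) := by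
    intro x hx
    rw [uIoc_of_le hy] at hx
    have hxL : 0 ≤ x * LamQ x := mul_nonneg hx.1.le (LamQ_nonneg hx.1.le)
    rw [Real.norm_eq_abs, mul_assoc, mul_comm (LamQ x), abs_mul, abs_of_nonneg hxL]
    exact mul_le_mul (hM x (Ioc_subset_Icc_self hx))
      (monotoneOn_mul_LamQ (mem_Ici.2 hx.1.le) (mem_Ici.2 hy) hx.2) hxL
      ((abs_nonneg _).trans (hM 0 (left_mem_Icc.2 hy)))
  refine (norm_integral_le_of_norm_le_const hbound).trans_eq ?_
  rw [sub_zero, abs_of_nonneg hy]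
  ring

lemma tendsto_intGam_sub_rho_mul (hf : ContinuousOn f (Ici 0)) :
    Tendsto (fun x => intGam f x - rho x * intLamQ f x) (𝓝[>] 0) (𝓝 0) := by
  have hGam : Tendsto (intGam f) (𝓝[>] 0) (𝓝 0) := by
    have h := continuousOn_primitive_interval' (intervalIntegrable_Gam_mul hf zero_le_one)
      left_mem_uIcc 0 left_mem_uIcc
    rw [uIcc_of_le zero_le_one] at h
    have h0 := h.mono Ioo_subset_Icc_self
    rw [ContinuousWithinAt, nhdsWithin_Ioo_eq_nhdsGT zero_lt_one, integral_same] at h0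
    exact h0
  obtain ⟨M, hM⟩ := isCompact_Icc.exists_bound_of_continuousOn
    (hf.mono (Icc_subset_Ici_self : Icc (0:ℝ) 1 ⊆ Ici 0))
  have hbound : ∀ᶠ x in 𝓝[>] 0, ‖rho x * intLamQ f x‖ ≤ M * x * |gamMulSelf x| := by
    filter_upwards [Ioc_mem_nhdsGT zero_lt_one] with x hx
    have hxL : 0 ≤ x * LamQ x := mul_nonneg hx.1.le (LamQ_nonneg hx.1.le)
    have hgam : |gamMulSelf x| = |rho x| * (x * LamQ x) := by
      rw [← Gam_mul_self hx.1.ne', Gam_eq_LamQ_mul_rho,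
        show LamQ x * rho x * x = rho x * (x * LamQ x) by ring, abs_mul, abs_of_nonneg hxL]
    calc ‖rho x * intLamQ f x‖ = |rho x| * |intLamQ f x| := by rw [Real.norm_eq_abs, abs_mul]
      _ ≤ |rho x| * (M * x * (x * LamQ x)) :=
        mul_le_mul_of_nonneg_left
          (abs_intLamQ_le hx.1.le fun t ht => hM t ⟨ht.1, ht.2.trans hx.2⟩) (abs_nonneg _)
      _ = M * x * |gamMulSelf x| := by rw [hgam]; ring
  have hlim : Tendsto (fun x => M * x * |gamMulSelf x|) (𝓝[>] 0) (𝓝 0) :=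
    (((continuous_const.mul continuous_id).mul continuous_gamMulSelf.abs).tendsto' 0 0
      (by simp)).mono_left nhdsWithin_le_nhds
  simpa using hGam.sub (squeeze_zero_norm' hbound hlim)

lemma abs_Aop_Hinv_div_LamQ_le (hf : ContinuousOn f (Ici 0)) {x M : ℝ} (hx : 0 < x)
    (hM : ∀ t ∈ Icc 0 x, ‖f t‖ ≤ M) : |Aop (Hinv f) x / LamQ x| ≤ M * (1 + x ^ 2) / 2 := by
  have hL := LamQ_pos hx
  rw [Aop_Hinv hf hx, show 1 / (x * LamQ x) * intLamQ f x / LamQ x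
      = intLamQ f x / (x * LamQ x ^ 2) by ring, abs_div, abs_of_pos (mul_pos hx (pow_pos hL 2)),
    div_le_iff₀ (mul_pos hx (pow_pos hL 2))]
  calc |intLamQ f x| ≤ M * x * (x * LamQ x) := abs_intLamQ_le hx.le hM
    _ = M * (1 + x ^ 2) / 2 * (x * LamQ x ^ 2) := by unfold LamQ; field_simp

lemma intervalIntegrable_Aop_Hinv_div_LamQ (hf : ContinuousOn f (Ici 0)) {y : ℝ} (hy : 0 ≤ y) :
    IntervalIntegrable (fun x => Aop (Hinv f) x / LamQ x) volume 0 y := by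
  have hcont : ContinuousOn (fun x => Aop (Hinv f) x / LamQ x) (Ioi 0) := by
    have hV : ContinuousOn (intLamQ f) (Ioi 0) := fun x hx =>
      (hasDerivAt_intLamQ hf hx).continuousAt.continuousWithinAt
    refine (hV.div (continuousOn_id.mul (continuous_LamQ.continuousOn.pow 2)) fun x hx => ?_).congr
      fun x hx => ?_
    · exact (mul_pos hx (pow_pos (LamQ_pos hx) 2)).ne'
    · simp only [Aop_Hinv hf hx, Pi.div_apply, Pi.mul_apply, Pi.pow_apply, id]
      ring
  obtain ⟨M, hM⟩ := isCompact_Icc.exists_bound_of_continuousOn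
    (hf.mono (Icc_subset_Ici_self : Icc 0 y ⊆ Ici 0))
  have hM0 : 0 ≤ M := (norm_nonneg _).trans (hM 0 (left_mem_Icc.2 hy))
  rw [intervalIntegrable_iff_integrableOn_Ioc_of_le hy]
  refine IntegrableOn.of_bound measure_Ioc_lt_top
    ((hcont.mono Ioc_subset_Ioi_self).aestronglyMeasurable measurableSet_Ioc)
    (M * (1 + y ^ 2) / 2)
    ((ae_restrict_iff' measurableSet_Ioc).2 (ae_of_all _ fun x hx => ?_))
  calc ‖Aop (Hinv f) x / LamQ x‖ ≤ M * (1 + x ^ 2) / 2 :=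
        abs_Aop_Hinv_div_LamQ_le hf hx.1 fun t ht => hM t ⟨ht.1, ht.2.trans hx.2⟩
    _ ≤ M * (1 + y ^ 2) / 2 := by gcongr; exacts [hx.1.le, hx.2]

lemma Hinv_eq_neg_LamQ_mul_integral (hf : ContinuousOn f (Ici 0)) {y : ℝ} (hy : 0 < y) :
    Hinv f y = -LamQ y * ∫ x in (0:ℝ)..y, Aop (Hinv f) x / LamQ x := by
  have hderiv : ∀ x ∈ Ioo 0 y, HasDerivAt (fun x => -(intGam f x - rho x * intLamQ f x))
      (Aop (Hinv f) x / LamQ x) x := fun x hx =>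
    (hasDerivAt_intGam_sub_rho_mul hf hx.1).neg.congr_deriv (by rw [Aop_Hinv hf hx.1]; ring)
  rw [integral_eq_sub_of_hasDerivAt_of_tendsto hy hderiv
    (intervalIntegrable_Aop_Hinv_div_LamQ hf hy.le) (tendsto_intGam_sub_rho_mul hf).neg
    ((hasDerivAt_intGam_sub_rho_mul hf hy).continuousAt.tendsto.mono_left nhdsWithin_le_nhds).neg,
    Hinv_eq]
  ring

lemma abs_Aop_Hinv_le (hf : ContinuousOn f (Ici 0)) {y : ℝ} (hy : 0 < y) :
    |Aop (Hinv f) y| ≤ ∫ x in (0:ℝ)..y, |f x| := by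
  have hyL := mul_pos hy (LamQ_pos hy)
  have hfy : ContinuousOn f (uIcc 0 y) :=
    hf.mono (by rw [uIcc_of_le hy.le]; exact Icc_subset_Ici_self)
  rw [Aop_Hinv hf hy, abs_mul, abs_of_pos (one_div_pos.2 hyL), one_div_mul_eq_div,
    div_le_iff₀ hyL, intLamQ, ← intervalIntegral.integral_mul_const]
  refine (abs_integral_le_integral_abs hy.le).trans (integral_mono_on hy.le
    (intervalIntegrable_LamQ_mul hf hy.le).abs (hfy.abs.intervalIntegrable.mul_const _)
    fun x hx => ?_)
  have hxL : 0 ≤ x * LamQ x := mul_nonneg hx.1 (LamQ_nonneg hx.1)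
  rw [mul_assoc, mul_comm (LamQ x), abs_mul, abs_of_nonneg hxL]
  exact mul_le_mul_of_nonneg_left (monotoneOn_mul_LamQ hx.1 (mem_Ici.2 hy.le) hx.2) (abs_nonneg _)

end

/-- Representations of `A H⁻¹ f` and `H⁻¹ f`, and the pointwise bound
`|A H⁻¹ f(y)| ≤ ∫₀^y |f|` for `y ≥ 1`. -/
theorem AHinv_representations (f : ℝ → ℝ) (hf : ContinuousOn f (Set.Ici 0)) :
    (∀ y > (0:ℝ),
      Aop (Hinv f) y = (1 / (y * LamQ y)) * ∫ x in (0:ℝ)..y, f x * LamQ x * x) ∧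
    (∀ y > (0:ℝ),
      Hinv f y = -LamQ y * ∫ x in (0:ℝ)..y, Aop (Hinv f) x / LamQ x) ∧
    (∀ y ≥ (1:ℝ), |Aop (Hinv f) y| ≤ ∫ x in (0:ℝ)..y, |f x|) :=
  ⟨fun _ hy => Aop_Hinv hf hy, fun _ hy => Hinv_eq_neg_LamQ_mul_integral hf hy,
    fun _ hy => abs_Aop_Hinv_le hf (zero_lt_one.trans_le hy)⟩
end

section
/- Let Z(y) = (1−y²)/(1+y²), V(y) = (y⁴−6y²+1)/(1+y²)², (Au)(y) = −u'(y) + Z(y)u(y)/y, (Hu)(y) = −u''(y) − (1/y)u'(y) + V(y)u(y)/y², and (Λg)(y) = y·g'(y). Then for every sufficiently differentiable f : (0,∞) → ℝ and all y > 0 the commutator identities hold: A(Λf) = Af + Λ(Af) − (ΛZ/y)·f, i.e. (A(Λf))(y) = (Af)(y) + y·(Af)'(y) − Z'(y)·f(y); and H(Λf) = 2Hf + Λ(Hf) − (ΛV/y²)·f, i.e. (H(Λf))(y) = 2(Hf)(y) + y·(Hf)'(y) − (V'(y)/y)·f(y). -/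
open Real

/-- The potential `V(y) = (y⁴ - 6y² + 1)/(1+y²)²`. -/
noncomputable def Vfun (y : ℝ) : ℝ := (y ^ 4 - 6 * y ^ 2 + 1) / (1 + y ^ 2) ^ 2

/-- The linearized operator `(Hu)(y) = -u'' - u'/y + V u/y²`. -/
noncomputable def Hop (u : ℝ → ℝ) : ℝ → ℝ :=
  fun y => -(deriv (deriv u) y) - (1 / y) * deriv u y + Vfun y * u y / y ^ 2

/-! The operators `-∂ + Z/y` and `-∂² - ∂/y + V/y²` would commute with the dilations
`f ↦ f(λ ·)` up to the factors `λ` and `λ²` if `Z` and `V` were constant; differentiating that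
relation at `λ = 1`, where the dilations have generator `Λ`, gives `AΛ = A + ΛA` and `HΛ = 2H + ΛH`.
The variation of the potentials under dilation contributes the extra terms `-(ΛZ/y) f` and
`-(ΛV/y²) f`. In particular the identities hold for any differentiable potentials. -/

open Filter Topology

noncomputable def scaling (f : ℝ → ℝ) : ℝ → ℝ := fun x => x * deriv f x

noncomputable def firstOrderOp (Z u : ℝ → ℝ) : ℝ → ℝ := fun y => -deriv u y + Z y * u y / y

noncomputable def radialOp (V u : ℝ → ℝ) : ℝ → ℝ :=
  fun y => -(deriv (deriv u) y) - (1 / y) * deriv u y + V y * u y / y ^ 2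

section Commutators

variable {f : ℝ → ℝ} {y : ℝ}

theorem hasDerivAt_scaling (hf : DifferentiableAt ℝ (deriv f) y) :
    HasDerivAt (scaling f) (deriv f y + y * deriv (deriv f) y) y :=
  ((hasDerivAt_id' y).fun_mul hf.hasDerivAt).congr_deriv (by rw [one_mul])

theorem deriv_deriv_scaling (hf : ∀ᶠ x in 𝓝 y, DifferentiableAt ℝ (deriv f) x)
    (hf' : DifferentiableAt ℝ (deriv (deriv f)) y) :
    deriv (deriv (scaling f)) y = 2 * deriv (deriv f) y + y * deriv (deriv (deriv f)) y := by
  have hderiv : deriv (scaling f) =ᶠ[𝓝 y] fun x => deriv f x + x * deriv (deriv f) x :=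
    hf.mono fun x hx => (hasDerivAt_scaling hx).deriv
  rw [hderiv.deriv_eq, (hf.self_of_nhds.hasDerivAt.fun_add
    ((hasDerivAt_id' y).fun_mul hf'.hasDerivAt)).deriv]
  ring

theorem firstOrderOp_scaling {Z : ℝ → ℝ} (hZ : DifferentiableAt ℝ Z y)
    (hf : DifferentiableAt ℝ f y) (hf' : DifferentiableAt ℝ (deriv f) y) (hy : y ≠ 0) :
    firstOrderOp Z (scaling f) y
      = firstOrderOp Z f y + y * deriv (firstOrderOp Z f) y - deriv Z y * f y := by
  have hA : HasDerivAt (firstOrderOp Z f)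
      (-deriv (deriv f) y +
        ((deriv Z y * f y + Z y * deriv f y) * y - Z y * f y * 1) / y ^ 2) y :=
    hf'.hasDerivAt.neg.add ((hZ.hasDerivAt.mul hf.hasDerivAt).div (hasDerivAt_id y) hy)
  simp only [firstOrderOp, (hasDerivAt_scaling hf').deriv, hA.deriv, scaling]
  field_simp
  ring

theorem radialOp_scaling {V : ℝ → ℝ} (hV : DifferentiableAt ℝ V y)
    (hf : DifferentiableAt ℝ f y) (hf' : ∀ᶠ x in 𝓝 y, DifferentiableAt ℝ (deriv f) x)
    (hf'' : DifferentiableAt ℝ (deriv (deriv f)) y) (hy : y ≠ 0) :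
    radialOp V (scaling f) y
      = 2 * radialOp V f y + y * deriv (radialOp V f) y - (deriv V y / y) * f y := by
  have hinv : HasDerivAt (fun x : ℝ => 1 / x) (-1 / y ^ 2) y := by
    simpa only [one_div, neg_div] using hasDerivAt_inv hy
  have hH : HasDerivAt (radialOp V f)
      (-deriv (deriv (deriv f)) y - (-1 / y ^ 2 * deriv f y + 1 / y * deriv (deriv f) y)
        + ((deriv V y * f y + V y * deriv f y) * y ^ 2 - V y * f y * (↑2 * y ^ (2 - 1)))
          / (y ^ 2) ^ 2) y :=
    (hf''.hasDerivAt.neg.sub (hinv.mul hf'.self_of_nhds.hasDerivAt)).add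
      ((hV.hasDerivAt.mul hf.hasDerivAt).div (hasDerivAt_pow 2 y) (pow_ne_zero 2 hy))
  simp only [radialOp, deriv_deriv_scaling hf' hf'', (hasDerivAt_scaling hf'.self_of_nhds).deriv,
    hH.deriv, scaling]
  field_simp
  ring

end Commutators

theorem differentiable_Zfun : Differentiable ℝ Zfun := fun y =>
  (by fun_prop : DifferentiableAt ℝ (fun y : ℝ => 1 - y ^ 2) y).div (by fun_prop) (by positivity)

theorem differentiable_Vfun : Differentiable ℝ Vfun := fun y =>
  (by fun_prop : DifferentiableAt ℝ (fun y : ℝ => y ^ 4 - 6 * y ^ 2 + 1) y).div (by fun_prop)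
    (by positivity)

/-- Commutator identities of `A` and `H` with the scaling generator `Λf = y f'`:
`A(Λf) = Af + Λ(Af) - (ΛZ/y) f` and `H(Λf) = 2Hf + Λ(Hf) - (ΛV/y²) f`. -/
theorem commutator_identities (f : ℝ → ℝ) (hf : ContDiffOn ℝ 3 f (Set.Ioi 0)) :
    (∀ y > (0:ℝ),
      Aop (fun x => x * deriv f x) y
        = Aop f y + y * deriv (Aop f) y - deriv Zfun y * f y) ∧
    (∀ y > (0:ℝ),
      Hop (fun x => x * deriv f x) y
        = 2 * Hop f y + y * deriv (Hop f) y - (deriv Vfun y / y) * f y) := by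
  have hf' : ContDiffOn ℝ 2 (deriv f) (Set.Ioi 0) := hf.deriv_of_isOpen isOpen_Ioi (by norm_num)
  have hf'' : ContDiffOn ℝ 1 (deriv (deriv f)) (Set.Ioi 0) :=
    hf'.deriv_of_isOpen isOpen_Ioi (by norm_num)
  have hdiff : ∀ x > (0:ℝ), DifferentiableAt ℝ f x ∧ DifferentiableAt ℝ (deriv f) x ∧
      DifferentiableAt ℝ (deriv (deriv f)) x := fun x hx =>
    ⟨(hf.contDiffAt (Ioi_mem_nhds hx)).differentiableAt (by simp),
      (hf'.contDiffAt (Ioi_mem_nhds hx)).differentiableAt (by simp),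
      (hf''.contDiffAt (Ioi_mem_nhds hx)).differentiableAt (by simp)⟩
  refine ⟨fun y hy => ?_, fun y hy => ?_⟩
  · exact firstOrderOp_scaling (differentiable_Zfun y) (hdiff y hy).1 (hdiff y hy).2.1 hy.ne'
  · exact radialOp_scaling (differentiable_Vfun y) (hdiff y hy).1
      ((eventually_gt_nhds hy).mono fun x hx => (hdiff x hx).2.1) (hdiff y hy).2.2 hy.ne'
end
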